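/- There exists a constant C, independent of n, such that for every n ≥ 1 and every x ∈ C[0,1], ‖K(I − Pₙ)K(I − Pₙ)x‖∞ ≤ C h ‖x‖∞; that is, the operator norm of K(I − Pₙ)K(I − Pₙ) on C[0,1] is O(h). -/

import Mathlib

open Set MeasureTheory

/-- The Fredholm integral operator with a Green's-function-type kernel. -/
noncomputable def Kop (κ₁ κ₂ : ℝ → ℝ → ℝ) (x : ℝ → ℝ) (s : ℝ) : ℝ :=
  ∫ t in (0:ℝ)..1, (if t ≤ s then κ₁ s t else κ₂ s t) * x t

/-- The supremum norm on `[0,1]`. -/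
noncomputable def supNorm (x : ℝ → ℝ) : ℝ := ⨆ t : Set.Icc (0:ℝ) 1, |x t.1|

/-- The index `j ∈ {1,…,n}` such that `s` belongs to the subinterval `[t_{j−1}, t_j)` of the
uniform partition `t_j = j/n` (with `j = n` for `s = 1`). -/
noncomputable def interpIdx (n : ℕ) (s : ℝ) : ℕ := min n (⌊s * n⌋.toNat + 1)

/-- The `2r+1` equidistant collocation points `τ_j^k = t_{j−1} + (k/(2r))·h` in the subinterval
`[t_{j−1}, t_j]`, where `h = 1/n`. -/
noncomputable def nodes (r n j : ℕ) : Fin (2 * r + 1) → ℝ :=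
  fun k => ((j:ℝ) - 1) / n + ((k.1:ℝ) / (2 * r)) * (1 / n)

/-- The piecewise interpolatory projection `Pₙ`: on each subinterval `[t_{j−1}, t_j]`, `Pₙ x`
is the unique polynomial of degree `≤ 2r` interpolating `x` at the `2r+1` equidistant
collocation points of that subinterval. -/
noncomputable def Pn (r n : ℕ) (x : ℝ → ℝ) (s : ℝ) : ℝ :=
  Polynomial.eval s
    (Lagrange.interpolate (Finset.univ : Finset (Fin (2 * r + 1)))
      (nodes r n (interpIdx n s)) (fun k => x (nodes r n (interpIdx n s) k)))

/-- The norm `‖x‖_{m,∞} = max_{0 ≤ i ≤ m} ‖x^{(i)}‖_∞` for `x ∈ C^m[0,1]`. -/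
noncomputable def normC (m : ℕ) (x : ℝ → ℝ) : ℝ :=
  ⨆ i : Fin (m + 1), ⨆ t : Set.Icc (0:ℝ) 1, |iteratedDerivWithin i.1 x (Set.Icc 0 1) t.1|

lemma interpIdx_pos (n : ℕ) (hn : 1 ≤ n) (s : ℝ) : 1 ≤ interpIdx n s := by
  unfold interpIdx; omega

lemma interpIdx_le (n : ℕ) (s : ℝ) : interpIdx n s ≤ n := min_le_left _ _

lemma interpIdx_mem (n : ℕ) (hn : 1 ≤ n) {s : ℝ} (hs : s ∈ Icc (0:ℝ) 1) :
    ((interpIdx n s : ℝ) - 1) / n ≤ s ∧ s ≤ (interpIdx n s : ℝ) / n := by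
  have hn0 : (0:ℝ) < n := by exact_mod_cast hn
  set m : ℕ := ⌊s * n⌋.toNat with hm
  have hsn : (0:ℝ) ≤ s * n := mul_nonneg hs.1 hn0.le
  have hmz : (⌊s * n⌋ : ℤ) = (m : ℤ) := by
    rw [hm, Int.toNat_of_nonneg (Int.floor_nonneg.mpr hsn)]
  have h1 : (m : ℝ) ≤ s * n := by
    have := Int.floor_le (s * n); rw [hmz] at this; exact_mod_cast this
  have h2 : s * n < (m : ℝ) + 1 := by
    have := Int.lt_floor_add_one (s * n); rw [hmz] at this; exact_mod_cast this
  rcases le_total (m + 1) n with hcase | hcase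
  · have hj : interpIdx n s = m + 1 := min_eq_right hcase
    rw [hj]
    constructor
    · rw [div_le_iff₀ hn0]
      push_cast; linarith
    · rw [le_div_iff₀ hn0]
      push_cast; linarith
  · have hj : interpIdx n s = n := min_eq_left hcase
    rw [hj]
    have hmn : (n : ℝ) ≤ (m : ℝ) + 1 := by exact_mod_cast hcase
    constructor
    · rw [div_le_iff₀ hn0]; linarith
    · rw [le_div_iff₀ hn0]
      nlinarith [hs.2, hn0]

lemma nodes_mem (r n : ℕ) (hr : 1 ≤ r) (hn : 1 ≤ n) (j : ℕ) (k : Fin (2 * r + 1)) :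
    nodes r n j k ∈ Icc (((j:ℝ) - 1) / n) ((j:ℝ) / n) := by
  have hn0 : (0:ℝ) < n := by exact_mod_cast hn
  have hr0 : (0:ℝ) < 2 * r := by positivity
  have hk1 : (k.1 : ℝ) ≤ 2 * r := by
    have := k.2; push_cast; exact_mod_cast Nat.lt_succ_iff.mp (by exact_mod_cast k.2)
  have hfrac0 : (0:ℝ) ≤ (k.1:ℝ) / (2 * r) := by positivity
  have hfrac1 : (k.1:ℝ) / (2 * r) ≤ 1 := by
    rw [div_le_one hr0]; exact hk1
  constructor
  · unfold nodes
    nlinarith [mul_nonneg hfrac0 (by positivity : (0:ℝ) ≤ 1/n)]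
  · unfold nodes
    have : ((j:ℝ)) / n = ((j:ℝ) - 1) / n + 1 / n := by ring
    rw [this]
    have : ((k.1:ℝ) / (2 * r)) * (1 / n) ≤ 1 * (1/n) :=
      mul_le_mul_of_nonneg_right hfrac1 (by positivity)
    linarith

lemma nodes_inj (r n : ℕ) (hr : 1 ≤ r) (hn : 1 ≤ n) (j : ℕ) :
    Set.InjOn (nodes r n j) (Finset.univ : Finset (Fin (2 * r + 1))) := by
  intro a _ b _ hab
  unfold nodes at hab
  have hn0 : (0:ℝ) < n := by exact_mod_cast hn
  have hr0 : (0:ℝ) < 2 * r := by positivity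
  have : (a.1 : ℝ) = (b.1 : ℝ) := by
    have h2 : ((a.1:ℝ) / (2 * r)) * (1 / n) = ((b.1:ℝ) / (2 * r)) * (1 / n) := by linarith
    have hne1 : ((2:ℝ) * r) ≠ 0 := ne_of_gt hr0
    have hne2 : ((1:ℝ) / n) ≠ 0 := by positivity
    field_simp at h2
    exact_mod_cast h2
  exact Fin.ext (by exact_mod_cast this)

lemma measurable_interpIdx (n : ℕ) : Measurable (interpIdx n) := by
  have h1 : Measurable fun s : ℝ => ⌊s * n⌋ :=
    Int.measurable_floor.comp (measurable_id.mul_const _)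
  exact (measurable_from_top (f := fun m : ℤ => min n (m.toNat + 1))).comp h1

section Sec2

/-- Pointwise bound on Lagrange basis polynomials at equispaced nodes. -/
lemma basis_bound {r n : ℕ} (hr : 1 ≤ r) (hn : 1 ≤ n) (j : ℕ) {s : ℝ}
    (hs : s ∈ Icc (((j:ℝ) - 1) / n) ((j:ℝ) / n)) (k : Fin (2 * r + 1)) :
    |Polynomial.eval s (Lagrange.basis Finset.univ (nodes r n j) k)| ≤ ((2*r:ℕ):ℝ) ^ (2*r) := by
  classical
  have hn0 : (0:ℝ) < n := by exact_mod_cast hn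
  have hr0 : (0:ℝ) < 2 * r := by positivity
  rw [Lagrange.basis, Polynomial.eval_prod]
  rw [Finset.abs_prod]
  have hcard : (Finset.univ.erase k).card = 2 * r := by
    rw [Finset.card_erase_of_mem (Finset.mem_univ k), Finset.card_univ, Fintype.card_fin]
    omega
  have hwidth : (j:ℝ)/n - ((j:ℝ)-1)/n = 1/n := by ring
  calc ∏ i ∈ Finset.univ.erase k,
        |Polynomial.eval s (Lagrange.basisDivisor (nodes r n j k) (nodes r n j i))|
      ≤ ∏ _i ∈ Finset.univ.erase k, ((2*r:ℕ):ℝ) := by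
        apply Finset.prod_le_prod (fun i _ => abs_nonneg _)
        intro i hi
        have hik : i ≠ k := (Finset.mem_erase.mp hi).1
        rw [Lagrange.basisDivisor]
        simp only [Polynomial.eval_mul, Polynomial.eval_C, Polynomial.eval_sub, Polynomial.eval_X]
        rw [abs_mul]
        have hni := nodes_mem r n hr hn j i
        have h1 : |s - nodes r n j i| ≤ 1 / n := by
          rw [abs_le]
          constructor <;> [linarith [hs.1, hni.2]; linarith [hs.2, hni.1]]
        have h3 : (1:ℝ) ≤ |(k.1:ℝ) - (i.1:ℝ)| := by
          have hne : (k.1:ℤ) - (i.1:ℤ) ≠ 0 := by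
            intro h
            have hki : k.1 = i.1 := by omega
            exact hik (Fin.ext hki.symm)
          have h4 := Int.one_le_abs hne
          have h5 : ((1:ℤ):ℝ) ≤ ((|(k.1:ℤ) - (i.1:ℤ)| : ℤ):ℝ) := by exact_mod_cast h4
          rw [Int.cast_abs] at h5
          push_cast at h5
          exact h5
        have hd : nodes r n j k - nodes r n j i = (((k.1:ℝ) - (i.1:ℝ)) / (2 * r)) * (1 / n) := by
          unfold nodes; ring
        have e1 : |(2:ℝ) * r| = 2 * r := abs_of_pos hr0
        have e2 : |(1:ℝ) / n| = 1 / n := abs_of_pos (by positivity)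
        have h2 : 1 / (2 * (r:ℝ) * n) ≤ |nodes r n j k - nodes r n j i| := by
          rw [hd, abs_mul, abs_div, e1, e2]
          have hq : 1/(2*(r:ℝ)*n) = 1/(2*(r:ℝ)) * (1/n) := by ring
          rw [hq]
          gcongr
        have hpos : (0:ℝ) < |nodes r n j k - nodes r n j i| := lt_of_lt_of_le (by positivity) h2
        have hinv : |(nodes r n j k - nodes r n j i)⁻¹| ≤ 2 * (r:ℝ) * n := by
          rw [abs_inv]
          have h6 : |nodes r n j k - nodes r n j i|⁻¹ ≤ (1 / (2 * (r:ℝ) * n))⁻¹ := by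
            apply inv_anti₀ (by positivity) h2
          rw [one_div, inv_inv] at h6
          exact h6
        calc |(nodes r n j k - nodes r n j i)⁻¹| * |s - nodes r n j i|
            ≤ (2 * (r:ℝ) * n) * (1 / n) := by
              apply mul_le_mul hinv h1 (abs_nonneg _) (by positivity)
          _ = ((2*r:ℕ):ℝ) := by push_cast; field_simp
      _ = ((2*r:ℕ):ℝ) ^ (2*r) := by rw [Finset.prod_const, hcard]

end Sec2

section Sec3
variable {r n : ℕ}

/-- The Lebesgue-type constant. -/
noncomputable def Lam (r : ℕ) : ℝ := ((2*r+1:ℕ):ℝ) * ((2*r:ℕ):ℝ) ^ (2*r)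

lemma Lam_nonneg (r : ℕ) : 0 ≤ Lam r := by unfold Lam; positivity

lemma nodes_mem_unit {j : ℕ} (hr : 1 ≤ r) (hn : 1 ≤ n) (hj1 : 1 ≤ j) (hjn : j ≤ n)
    (k : Fin (2 * r + 1)) : nodes r n j k ∈ Icc (0:ℝ) 1 := by
  have hn0 : (0:ℝ) < n := by exact_mod_cast hn
  have h := nodes_mem r n hr hn j k
  have h1 : (0:ℝ) ≤ ((j:ℝ) - 1) / n := by
    apply div_nonneg _ hn0.le
    have : (1:ℝ) ≤ (j:ℝ) := by exact_mod_cast hj1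
    linarith
  have h2 : (j:ℝ) / n ≤ 1 := by
    rw [div_le_one hn0]
    exact_mod_cast hjn
  exact ⟨le_trans h1 h.1, le_trans h.2 h2⟩

lemma eval_Pn (r n : ℕ) (x : ℝ → ℝ) (s : ℝ) :
    Pn r n x s = ∑ k : Fin (2 * r + 1), x (nodes r n (interpIdx n s) k) *
      Polynomial.eval s (Lagrange.basis Finset.univ (nodes r n (interpIdx n s)) k) := by
  unfold Pn
  rw [Lagrange.interpolate_apply, Polynomial.eval_finset_sum]
  simp [Polynomial.eval_mul]

/-- Stability: `|Pₙ f s| ≤ Λ · B` whenever `|f| ≤ B` on `[0,1]`. -/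
lemma Pn_bound (hr : 1 ≤ r) (hn : 1 ≤ n) {f : ℝ → ℝ} {B : ℝ}
    (hf : ∀ t ∈ Icc (0:ℝ) 1, |f t| ≤ B) {s : ℝ} (hs : s ∈ Icc (0:ℝ) 1) :
    |Pn r n f s| ≤ Lam r * B := by
  have hsI := interpIdx_mem n hn hs
  have hB : 0 ≤ B := le_trans (abs_nonneg _) (hf 0 ⟨le_refl _, zero_le_one⟩)
  rw [eval_Pn]
  calc |∑ k : Fin (2 * r + 1), f (nodes r n (interpIdx n s) k) *
        Polynomial.eval s (Lagrange.basis Finset.univ (nodes r n (interpIdx n s)) k)|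
      ≤ ∑ k : Fin (2 * r + 1), |f (nodes r n (interpIdx n s) k) *
        Polynomial.eval s (Lagrange.basis Finset.univ (nodes r n (interpIdx n s)) k)| :=
        Finset.abs_sum_le_sum_abs _ _
    _ ≤ ∑ _k : Fin (2 * r + 1), B * (((2*r:ℕ):ℝ) ^ (2*r)) := by
        apply Finset.sum_le_sum
        intro k _
        rw [abs_mul]
        apply mul_le_mul
        · exact hf _ (nodes_mem_unit hr hn (interpIdx_pos n hn s) (interpIdx_le n s) k)
        · exact basis_bound hr hn _ ⟨hsI.1, hsI.2⟩ k
        · exact abs_nonneg _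
        · exact hB
    _ = Lam r * B := by
        rw [Finset.sum_const, Finset.card_univ, Fintype.card_fin, nsmul_eq_mul]
        unfold Lam; push_cast; ring

/-- Interpolation error for Lipschitz functions: `|f s − Pₙ f s| ≤ Λ · L / n`. -/
lemma Pn_err (hr : 1 ≤ r) (hn : 1 ≤ n) {f : ℝ → ℝ} {L : ℝ} (hL : 0 ≤ L)
    (hf : ∀ a ∈ Icc (0:ℝ) 1, ∀ b ∈ Icc (0:ℝ) 1, |f a - f b| ≤ L * |a - b|)
    {s : ℝ} (hs : s ∈ Icc (0:ℝ) 1) :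
    |f s - Pn r n f s| ≤ Lam r * L * (1/n) := by
  classical
  have hn0 : (0:ℝ) < n := by exact_mod_cast hn
  have hsI := interpIdx_mem n hn hs
  set j := interpIdx n s with hj
  have hinj := nodes_inj r n hr hn j
  have hone : ∑ k : Fin (2 * r + 1),
      Polynomial.eval s (Lagrange.basis Finset.univ (nodes r n j) k) = 1 := by
    have := Lagrange.sum_basis hinj (Finset.univ_nonempty)
    calc ∑ k : Fin (2 * r + 1), Polynomial.eval s (Lagrange.basis Finset.univ (nodes r n j) k)
        = Polynomial.eval s (∑ k : Fin (2 * r + 1), Lagrange.basis Finset.univ (nodes r n j) k) :=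
          (Polynomial.eval_finset_sum _ _ _).symm
      _ = 1 := by rw [this, Polynomial.eval_one]
  have key : f s - Pn r n f s = ∑ k : Fin (2 * r + 1),
      (f s - f (nodes r n j k)) *
        Polynomial.eval s (Lagrange.basis Finset.univ (nodes r n j) k) := by
    rw [eval_Pn, ← hj]
    have hfs : f s = ∑ k : Fin (2 * r + 1),
        f s * Polynomial.eval s (Lagrange.basis Finset.univ (nodes r n j) k) := by
      rw [← Finset.mul_sum, hone, mul_one]
    calc f s - ∑ k : Fin (2 * r + 1), f (nodes r n j k) *
          Polynomial.eval s (Lagrange.basis Finset.univ (nodes r n j) k)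
        = (∑ k : Fin (2 * r + 1),
            f s * Polynomial.eval s (Lagrange.basis Finset.univ (nodes r n j) k)) -
          ∑ k : Fin (2 * r + 1), f (nodes r n j k) *
            Polynomial.eval s (Lagrange.basis Finset.univ (nodes r n j) k) := by rw [← hfs]
      _ = ∑ k : Fin (2 * r + 1), (f s - f (nodes r n j k)) *
            Polynomial.eval s (Lagrange.basis Finset.univ (nodes r n j) k) := by
          rw [← Finset.sum_sub_distrib]
          exact Finset.sum_congr rfl (fun k _ => by ring)
  rw [key]
  have hwidth : (j:ℝ)/n - ((j:ℝ)-1)/n = 1/n := by ring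
  calc |∑ k : Fin (2 * r + 1), (f s - f (nodes r n j k)) *
        Polynomial.eval s (Lagrange.basis Finset.univ (nodes r n j) k)|
      ≤ ∑ k : Fin (2 * r + 1), |(f s - f (nodes r n j k)) *
        Polynomial.eval s (Lagrange.basis Finset.univ (nodes r n j) k)| :=
        Finset.abs_sum_le_sum_abs _ _
    _ ≤ ∑ _k : Fin (2 * r + 1), (L * (1/n)) * (((2*r:ℕ):ℝ) ^ (2*r)) := by
        apply Finset.sum_le_sum
        intro k _
        rw [abs_mul]
        apply mul_le_mul _ (basis_bound hr hn _ ⟨hsI.1, hsI.2⟩ k) (abs_nonneg _)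
          (by positivity)
        have hnk := nodes_mem r n hr hn j k
        have hdist : |s - nodes r n j k| ≤ 1/n := by
          rw [abs_le]
          constructor <;> [linarith [hsI.1, hnk.2]; linarith [hsI.2, hnk.1]]
        calc |f s - f (nodes r n j k)| ≤ L * |s - nodes r n j k| :=
            hf s hs _ (nodes_mem_unit hr hn (interpIdx_pos n hn s) (interpIdx_le n s) k)
          _ ≤ L * (1/n) := mul_le_mul_of_nonneg_left hdist hL
    _ = Lam r * L * (1/n) := by
        rw [Finset.sum_const, Finset.card_univ, Fintype.card_fin, nsmul_eq_mul]
        unfold Lam; push_cast; ring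
end Sec3

section Sec4

lemma measurable_Pn (r n : ℕ) (f : ℝ → ℝ) : Measurable (Pn r n f) := by
  classical
  have hidx : Measurable (interpIdx n) := measurable_interpIdx n
  have hrepr : Pn r n f = fun s => ∑ j ∈ Finset.range (n + 1),
      if interpIdx n s = j then
        Polynomial.eval s (Lagrange.interpolate (Finset.univ : Finset (Fin (2 * r + 1)))
          (nodes r n j) (fun k => f (nodes r n j k)))
      else 0 := by
    funext s
    rw [Finset.sum_ite_eq (Finset.range (n+1)) (interpIdx n s)]
    rw [if_pos (Finset.mem_range.mpr (Nat.lt_succ_of_le (interpIdx_le n s)))]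
    rfl
  rw [hrepr]
  apply Finset.measurable_sum
  intro j _
  apply Measurable.ite
  · exact hidx (MeasurableSet.singleton j)
  · exact (Polynomial.continuous _).measurable
  · exact measurable_const

lemma supNorm_nonneg_of (x : ℝ → ℝ) (hb : BddAbove (Set.range fun t : Set.Icc (0:ℝ) 1 => |x t.1|)) :
    0 ≤ supNorm x :=
  le_trans (abs_nonneg _) (le_ciSup hb ⟨0, le_refl _, zero_le_one⟩)

lemma le_supNorm {x : ℝ → ℝ} (hx : ContinuousOn x (Icc (0:ℝ) 1)) {t : ℝ}
    (ht : t ∈ Icc (0:ℝ) 1) : |x t| ≤ supNorm x := by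
  obtain ⟨M, hM⟩ := isCompact_Icc.exists_bound_of_continuousOn hx
  have hb : BddAbove (Set.range fun t : Set.Icc (0:ℝ) 1 => |x t.1|) := by
    refine ⟨M, ?_⟩
    rintro y ⟨u, rfl⟩
    simpa [Real.norm_eq_abs] using hM u.1 u.2
  exact le_ciSup hb ⟨t, ht⟩

lemma supNorm_nonneg {x : ℝ → ℝ} (hx : ContinuousOn x (Icc (0:ℝ) 1)) : 0 ≤ supNorm x :=
  le_trans (abs_nonneg _) (le_supNorm hx ⟨le_refl _, zero_le_one⟩)

lemma supNorm_le {x : ℝ → ℝ} {B : ℝ} (hB : 0 ≤ B)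
    (h : ∀ t ∈ Icc (0:ℝ) 1, |x t| ≤ B) : supNorm x ≤ B :=
  Real.iSup_le (fun t => h t.1 t.2) hB

end Sec4

section Sec5

/-- Convexity, compactness and bound/Lipschitz extraction for a triangle-type region. -/
lemma triangle_facts (Ω : Set (ℝ × ℝ)) (f : ℝ × ℝ → ℝ)
    (hconv : Convex ℝ Ω) (hcomp : IsCompact Ω) (hint : (interior Ω).Nonempty)
    (hf : ContDiffOn ℝ 1 f Ω) :
    ∃ C, 0 ≤ C ∧ (∀ p ∈ Ω, |f p| ≤ C) ∧
      (∀ p ∈ Ω, ∀ q ∈ Ω, |f p - f q| ≤ C * ‖p - q‖) := by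
  have hud : UniqueDiffOn ℝ Ω := uniqueDiffOn_convex hconv hint
  obtain ⟨M, hM⟩ := hcomp.exists_bound_of_continuousOn hf.continuousOn
  obtain ⟨L, hL⟩ := hcomp.exists_bound_of_continuousOn
    (hf.continuousOn_fderivWithin hud (le_refl 1))
  refine ⟨max (max M L) 0, le_max_right _ _, ?_, ?_⟩
  · intro p hp
    calc |f p| = ‖f p‖ := rfl
      _ ≤ M := hM p hp
      _ ≤ _ := le_trans (le_max_left M L) (le_max_left (max M L) 0)
  · intro p hp q hq
    have := hconv.norm_image_sub_le_of_norm_fderivWithin_le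
      (C := max (max M L) 0)
      (hf.differentiableOn one_ne_zero)
      (fun x hx => le_trans (hL x hx) (le_trans (le_max_right M L) (le_max_left (max M L) 0)))
      hq hp
    simpa [Real.norm_eq_abs] using this

lemma omega1_facts : Convex ℝ {p : ℝ × ℝ | 0 ≤ p.2 ∧ p.2 ≤ p.1 ∧ p.1 ≤ 1} ∧
    IsCompact {p : ℝ × ℝ | 0 ≤ p.2 ∧ p.2 ≤ p.1 ∧ p.1 ≤ 1} ∧
    (interior {p : ℝ × ℝ | 0 ≤ p.2 ∧ p.2 ≤ p.1 ∧ p.1 ≤ 1}).Nonempty := by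
  refine ⟨?_, ?_, ?_⟩
  · intro p hp q hq a b ha hb hab
    simp only [mem_setOf_eq] at *
    refine ⟨?_, ?_, ?_⟩
    · have : (a • p + b • q).2 = a * p.2 + b * q.2 := rfl
      rw [this]; nlinarith [hp.1, hq.1]
    · have h1 : (a • p + b • q).2 = a * p.2 + b * q.2 := rfl
      have h2 : (a • p + b • q).1 = a * p.1 + b * q.1 := rfl
      rw [h1, h2]; nlinarith [hp.2.1, hq.2.1]
    · have h2 : (a • p + b • q).1 = a * p.1 + b * q.1 := rfl
      rw [h2]; nlinarith [hp.2.2, hq.2.2]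
  · apply IsCompact.of_isClosed_subset (isCompact_Icc (a := ((0:ℝ),(0:ℝ))) (b := (1,1)))
    · have : {p : ℝ × ℝ | 0 ≤ p.2 ∧ p.2 ≤ p.1 ∧ p.1 ≤ 1} =
        {p : ℝ × ℝ | 0 ≤ p.2} ∩ ({p : ℝ × ℝ | p.2 ≤ p.1} ∩ {p : ℝ × ℝ | p.1 ≤ 1}) := rfl
      rw [this]
      exact (isClosed_le continuous_const continuous_snd).inter
        ((isClosed_le continuous_snd continuous_fst).inter
          (isClosed_le continuous_fst continuous_const))
    · rintro ⟨x, y⟩ ⟨h1, h2, h3⟩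
      simp only [mem_setOf_eq] at *
      exact ⟨Prod.mk_le_mk.mpr ⟨by linarith, by linarith⟩,
        Prod.mk_le_mk.mpr ⟨by linarith, by linarith⟩⟩
  · refine ⟨(3/4, 1/4), ?_⟩
    apply mem_interior.mpr
    refine ⟨{p : ℝ × ℝ | 0 < p.2} ∩ ({p : ℝ × ℝ | p.2 < p.1} ∩ {p : ℝ × ℝ | p.1 < 1}), ?_, ?_, ?_⟩
    · rintro ⟨x, y⟩ ⟨h1, h2, h3⟩
      exact ⟨le_of_lt h1, le_of_lt h2, le_of_lt h3⟩
    · exact (isOpen_lt continuous_const continuous_snd).inter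
        ((isOpen_lt continuous_snd continuous_fst).inter
          (isOpen_lt continuous_fst continuous_const))
    · refine ⟨by norm_num, by norm_num, by norm_num⟩

lemma omega2_facts : Convex ℝ {p : ℝ × ℝ | 0 ≤ p.1 ∧ p.1 ≤ p.2 ∧ p.2 ≤ 1} ∧
    IsCompact {p : ℝ × ℝ | 0 ≤ p.1 ∧ p.1 ≤ p.2 ∧ p.2 ≤ 1} ∧
    (interior {p : ℝ × ℝ | 0 ≤ p.1 ∧ p.1 ≤ p.2 ∧ p.2 ≤ 1}).Nonempty := by
  refine ⟨?_, ?_, ?_⟩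
  · intro p hp q hq a b ha hb hab
    simp only [mem_setOf_eq] at *
    refine ⟨?_, ?_, ?_⟩
    · have : (a • p + b • q).1 = a * p.1 + b * q.1 := rfl
      rw [this]; nlinarith [hp.1, hq.1]
    · have h1 : (a • p + b • q).2 = a * p.2 + b * q.2 := rfl
      have h2 : (a • p + b • q).1 = a * p.1 + b * q.1 := rfl
      rw [h1, h2]; nlinarith [hp.2.1, hq.2.1]
    · have h1 : (a • p + b • q).2 = a * p.2 + b * q.2 := rfl
      rw [h1]; nlinarith [hp.2.2, hq.2.2]
  · apply IsCompact.of_isClosed_subset (isCompact_Icc (a := ((0:ℝ),(0:ℝ))) (b := (1,1)))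
    · have : {p : ℝ × ℝ | 0 ≤ p.1 ∧ p.1 ≤ p.2 ∧ p.2 ≤ 1} =
        {p : ℝ × ℝ | 0 ≤ p.1} ∩ ({p : ℝ × ℝ | p.1 ≤ p.2} ∩ {p : ℝ × ℝ | p.2 ≤ 1}) := rfl
      rw [this]
      exact (isClosed_le continuous_const continuous_fst).inter
        ((isClosed_le continuous_fst continuous_snd).inter
          (isClosed_le continuous_snd continuous_const))
    · rintro ⟨x, y⟩ ⟨h1, h2, h3⟩
      simp only [mem_setOf_eq] at *
      exact ⟨Prod.mk_le_mk.mpr ⟨by linarith, by linarith⟩,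
        Prod.mk_le_mk.mpr ⟨by linarith, by linarith⟩⟩
  · refine ⟨(1/4, 3/4), ?_⟩
    apply mem_interior.mpr
    refine ⟨{p : ℝ × ℝ | 0 < p.1} ∩ ({p : ℝ × ℝ | p.1 < p.2} ∩ {p : ℝ × ℝ | p.2 < 1}), ?_, ?_, ?_⟩
    · rintro ⟨x, y⟩ ⟨h1, h2, h3⟩
      exact ⟨le_of_lt h1, le_of_lt h2, le_of_lt h3⟩
    · exact (isOpen_lt continuous_const continuous_fst).inter
        ((isOpen_lt continuous_fst continuous_snd).inter
          (isOpen_lt continuous_snd continuous_const))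
    · refine ⟨by norm_num, by norm_num, by norm_num⟩

lemma prod_norm_fst (a b c : ℝ) : ‖((a, c) : ℝ × ℝ) - (b, c)‖ = |a - b| := by
  have : ((a, c) : ℝ × ℝ) - (b, c) = (a - b, 0) := by simp
  rw [this, Prod.norm_def]
  simp [Real.norm_eq_abs, abs_nonneg]

end Sec5

section Sec6
variable {κ₁ κ₂ : ℝ → ℝ → ℝ}

lemma kernel_facts
    (hκ₁ : ContDiffOn ℝ 1 (Function.uncurry κ₁) {p : ℝ × ℝ | 0 ≤ p.2 ∧ p.2 ≤ p.1 ∧ p.1 ≤ 1})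
    (hκ₂ : ContDiffOn ℝ 1 (Function.uncurry κ₂) {p : ℝ × ℝ | 0 ≤ p.1 ∧ p.1 ≤ p.2 ∧ p.2 ≤ 1})
    (hdiag : ∀ s ∈ Icc (0:ℝ) 1, κ₁ s s = κ₂ s s) :
    ∃ M L : ℝ, 0 ≤ M ∧ 0 ≤ L ∧
      (∀ s ∈ Icc (0:ℝ) 1, ∀ t ∈ Icc (0:ℝ) 1, |(if t ≤ s then κ₁ s t else κ₂ s t)| ≤ M) ∧
      (∀ s ∈ Icc (0:ℝ) 1, ∀ s' ∈ Icc (0:ℝ) 1, ∀ t ∈ Icc (0:ℝ) 1,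
        |(if t ≤ s then κ₁ s t else κ₂ s t) - (if t ≤ s' then κ₁ s' t else κ₂ s' t)|
          ≤ L * |s - s'|) := by
  obtain ⟨hc1, hk1, hi1⟩ := omega1_facts
  obtain ⟨hc2, hk2, hi2⟩ := omega2_facts
  obtain ⟨C₁, hC₁0, hC₁b, hC₁l⟩ := triangle_facts _ _ hc1 hk1 hi1 hκ₁
  obtain ⟨C₂, hC₂0, hC₂b, hC₂l⟩ := triangle_facts _ _ hc2 hk2 hi2 hκ₂
  set M := max C₁ C₂ with hMdef
  have hM0 : 0 ≤ M := le_trans hC₁0 (le_max_left _ _)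
  have hmem1 : ∀ s t : ℝ, 0 ≤ t → t ≤ s → s ≤ 1 →
      ((s, t) : ℝ × ℝ) ∈ {p : ℝ × ℝ | 0 ≤ p.2 ∧ p.2 ≤ p.1 ∧ p.1 ≤ 1} :=
    fun s t h1 h2 h3 => ⟨h1, h2, h3⟩
  have hmem2 : ∀ s t : ℝ, 0 ≤ s → s ≤ t → t ≤ 1 →
      ((s, t) : ℝ × ℝ) ∈ {p : ℝ × ℝ | 0 ≤ p.1 ∧ p.1 ≤ p.2 ∧ p.2 ≤ 1} :=
    fun s t h1 h2 h3 => ⟨h1, h2, h3⟩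
  refine ⟨M, 2 * M, hM0, by linarith, ?_, ?_⟩
  · intro s hs t ht
    by_cases h : t ≤ s
    · rw [if_pos h]
      exact le_trans (hC₁b (s, t) (hmem1 s t ht.1 h hs.2)) (le_max_left _ _)
    · rw [if_neg h]
      push_neg at h
      exact le_trans (hC₂b (s, t) (hmem2 s t hs.1 h.le ht.2)) (le_max_right _ _)
  · intro s hs s' hs' t ht
    have key : ∀ a ∈ Icc (0:ℝ) 1, ∀ b ∈ Icc (0:ℝ) 1, ∀ u ∈ Icc (0:ℝ) 1, b ≤ a →
        |(if u ≤ a then κ₁ a u else κ₂ a u) - (if u ≤ b then κ₁ b u else κ₂ b u)|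
          ≤ 2 * M * |a - b| := by
      intro a ha b hb u hu hba
      have habs : |a - b| = a - b := abs_of_nonneg (by linarith)
      by_cases h1 : u ≤ a
      · by_cases h2 : u ≤ b
        · -- both κ₁
          rw [if_pos h1, if_pos h2]
          have := hC₁l (a, u) (hmem1 a u hu.1 h1 ha.2) (b, u) (hmem1 b u hu.1 h2 hb.2)
          rw [prod_norm_fst] at this
          calc |κ₁ a u - κ₁ b u| ≤ C₁ * |a - b| := this
            _ ≤ 2 * M * |a - b| := by
                apply mul_le_mul_of_nonneg_right _ (abs_nonneg _)
                have : C₁ ≤ M := le_max_left _ _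
                linarith
        · -- b < u ≤ a : κ₁ a u vs κ₂ b u, cross the diagonal at u
          push_neg at h2
          rw [if_pos h1, if_neg (not_le.mpr h2)]
          have e1 := hC₁l (a, u) (hmem1 a u hu.1 h1 ha.2) (u, u) (hmem1 u u hu.1 le_rfl hu.2)
          have e2 := hC₂l (u, u) (hmem2 u u hu.1 le_rfl hu.2) (b, u) (hmem2 b u hb.1 h2.le hu.2)
          rw [prod_norm_fst] at e1 e2
          have hd : κ₁ u u = κ₂ u u := hdiag u hu
          have habs1 : |a - u| = a - u := abs_of_nonneg (by linarith)
          have habs2 : |u - b| = u - b := abs_of_nonneg (by linarith)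
          calc |κ₁ a u - κ₂ b u|
              ≤ |κ₁ a u - κ₁ u u| + |κ₂ u u - κ₂ b u| := by
                rw [hd] at *
                exact abs_sub_le _ _ _
            _ ≤ C₁ * |a - u| + C₂ * |u - b| := add_le_add e1 e2
            _ ≤ M * (a - u) + M * (u - b) := by
                rw [habs1, habs2]
                have h3 : C₁ ≤ M := le_max_left _ _
                have h4 : C₂ ≤ M := le_max_right _ _
                have h5 : (0:ℝ) ≤ a - u := by linarith
                have h6 : (0:ℝ) ≤ u - b := by linarith
                nlinarith
            _ ≤ 2 * M * |a - b| := by rw [habs]; nlinarith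
      · -- a < u, and u ≤ b would give b ≥ u > a ≥ b, contradiction unless u ≤ b fails too
        push_neg at h1
        have h2 : ¬ u ≤ b := fun h => absurd (le_trans h hba) (not_le.mpr h1)
        rw [if_neg (not_le.mpr h1), if_neg h2]
        push_neg at h2
        have := hC₂l (a, u) (hmem2 a u ha.1 h1.le hu.2) (b, u) (hmem2 b u hb.1 h2.le hu.2)
        rw [prod_norm_fst] at this
        calc |κ₂ a u - κ₂ b u| ≤ C₂ * |a - b| := this
          _ ≤ 2 * M * |a - b| := by
              apply mul_le_mul_of_nonneg_right _ (abs_nonneg _)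
              have : C₂ ≤ M := le_max_right _ _
              linarith
    rcases le_total s' s with hc | hc
    · exact key s hs s' hs' t ht hc
    · have := key s' hs' s hs t ht hc
      rw [abs_sub_comm] at this
      rw [abs_sub_comm (s:ℝ) s']
      exact this
end Sec6

section Sec7
variable {κ₁ κ₂ : ℝ → ℝ → ℝ}

lemma Kop_integrable
    (hκ₁ : ContDiffOn ℝ 1 (Function.uncurry κ₁) {p : ℝ × ℝ | 0 ≤ p.2 ∧ p.2 ≤ p.1 ∧ p.1 ≤ 1})
    (hκ₂ : ContDiffOn ℝ 1 (Function.uncurry κ₂) {p : ℝ × ℝ | 0 ≤ p.1 ∧ p.1 ≤ p.2 ∧ p.2 ≤ 1})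
    {z : ℝ → ℝ} (hz : AEStronglyMeasurable z (volume.restrict (Ioc (0:ℝ) 1)))
    {B : ℝ} (hzB : ∀ t ∈ Icc (0:ℝ) 1, |z t| ≤ B)
    {s : ℝ} (hs : s ∈ Icc (0:ℝ) 1) :
    IntervalIntegrable (fun t => (if t ≤ s then κ₁ s t else κ₂ s t) * z t) volume 0 1 := by
  have hB : 0 ≤ B := le_trans (abs_nonneg _) (hzB 0 ⟨le_refl _, zero_le_one⟩)
  -- bound for κ₁ on Icc 0 s and κ₂ on Icc s 1
  have hcont1 : ContinuousOn (fun t => κ₁ s t) (Icc 0 s) := by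
    have h' : ContinuousOn (Function.uncurry κ₁ ∘ fun t : ℝ => (s, t)) (Icc 0 s) :=
      hκ₁.continuousOn.comp (continuous_const.prodMk continuous_id).continuousOn
        (fun t ht => ⟨ht.1, ht.2, hs.2⟩)
    exact h'
  have hcont2 : ContinuousOn (fun t => κ₂ s t) (Icc s 1) := by
    have h' : ContinuousOn (Function.uncurry κ₂ ∘ fun t : ℝ => (s, t)) (Icc s 1) :=
      hκ₂.continuousOn.comp (continuous_const.prodMk continuous_id).continuousOn
        (fun t ht => ⟨hs.1, ht.1, ht.2⟩)
    exact h'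
  obtain ⟨M₁, hM₁⟩ := isCompact_Icc.exists_bound_of_continuousOn hcont1
  obtain ⟨M₂, hM₂⟩ := isCompact_Icc.exists_bound_of_continuousOn hcont2
  apply IntervalIntegrable.trans (b := s)
  · rw [intervalIntegrable_iff_integrableOn_Ioc_of_le hs.1]
    have hsub : Ioc (0:ℝ) s ⊆ Ioc (0:ℝ) 1 := Ioc_subset_Ioc_right hs.2
    have hz' : AEStronglyMeasurable z (volume.restrict (Ioc (0:ℝ) s)) :=
      hz.mono_measure (Measure.restrict_mono hsub le_rfl)
    have hg : AEStronglyMeasurable (fun t => κ₁ s t * z t) (volume.restrict (Ioc (0:ℝ) s)) :=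
      ((hcont1.mono Ioc_subset_Icc_self).aestronglyMeasurable measurableSet_Ioc).mul hz'
    have hmem : ∀ᵐ t ∂(volume.restrict (Ioc (0:ℝ) s)), t ∈ Ioc (0:ℝ) s :=
      ae_restrict_mem measurableSet_Ioc
    have heq : (fun t => κ₁ s t * z t)
        =ᵐ[volume.restrict (Ioc (0:ℝ) s)] fun t => (if t ≤ s then κ₁ s t else κ₂ s t) * z t := by
      filter_upwards [hmem] with t ht
      rw [if_pos ht.2]
    apply Integrable.mono' (integrable_const (|M₁| * B)) (hg.congr heq)
    filter_upwards [hmem] with t ht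
    rw [if_pos ht.2]
    rw [Real.norm_eq_abs, abs_mul]
    apply mul_le_mul ?_ (hzB t ⟨ht.1.le, le_trans ht.2 hs.2⟩)
      (abs_nonneg _) (abs_nonneg _)
    calc |κ₁ s t| = ‖κ₁ s t‖ := rfl
      _ ≤ M₁ := hM₁ t ⟨ht.1.le, ht.2⟩
      _ ≤ |M₁| := le_abs_self _
  · rw [intervalIntegrable_iff_integrableOn_Ioc_of_le hs.2]
    have hsub : Ioc s 1 ⊆ Ioc (0:ℝ) 1 := Ioc_subset_Ioc_left hs.1
    have hz' : AEStronglyMeasurable z (volume.restrict (Ioc s 1)) :=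
      hz.mono_measure (Measure.restrict_mono hsub le_rfl)
    have hg : AEStronglyMeasurable (fun t => κ₂ s t * z t) (volume.restrict (Ioc s 1)) :=
      ((hcont2.mono Ioc_subset_Icc_self).aestronglyMeasurable measurableSet_Ioc).mul hz'
    have hmem : ∀ᵐ t ∂(volume.restrict (Ioc s 1)), t ∈ Ioc s 1 :=
      ae_restrict_mem measurableSet_Ioc
    have heq : (fun t => κ₂ s t * z t)
        =ᵐ[volume.restrict (Ioc s 1)] fun t => (if t ≤ s then κ₁ s t else κ₂ s t) * z t := by
      filter_upwards [hmem] with t ht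
      rw [if_neg (not_le.mpr ht.1)]
    apply Integrable.mono' (integrable_const (|M₂| * B)) (hg.congr heq)
    filter_upwards [hmem] with t ht
    rw [if_neg (not_le.mpr ht.1)]
    rw [Real.norm_eq_abs, abs_mul]
    apply mul_le_mul ?_ (hzB t ⟨le_trans hs.1 ht.1.le, ht.2⟩)
      (abs_nonneg _) (abs_nonneg _)
    calc |κ₂ s t| = ‖κ₂ s t‖ := rfl
      _ ≤ M₂ := hM₂ t ⟨ht.1.le, ht.2⟩
      _ ≤ |M₂| := le_abs_self _

lemma Kop_bound {M : ℝ}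
    (hM : ∀ s ∈ Icc (0:ℝ) 1, ∀ t ∈ Icc (0:ℝ) 1, |(if t ≤ s then κ₁ s t else κ₂ s t)| ≤ M)
    {z : ℝ → ℝ} {B : ℝ} (hB : 0 ≤ B) (hzB : ∀ t ∈ Icc (0:ℝ) 1, |z t| ≤ B)
    {s : ℝ} (hs : s ∈ Icc (0:ℝ) 1) : |Kop κ₁ κ₂ z s| ≤ M * B := by
  have h := intervalIntegral.norm_integral_le_of_norm_le_const (C := M * B)
    (a := (0:ℝ)) (b := 1) (f := fun t => (if t ≤ s then κ₁ s t else κ₂ s t) * z t) ?_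
  · calc |Kop κ₁ κ₂ z s| = ‖∫ t in (0:ℝ)..1, (if t ≤ s then κ₁ s t else κ₂ s t) * z t‖ := rfl
      _ ≤ M * B * |1 - 0| := h
      _ = M * B := by norm_num
  · intro t ht
    rw [uIoc_of_le zero_le_one] at ht
    have ht' : t ∈ Icc (0:ℝ) 1 := ⟨ht.1.le, ht.2⟩
    rw [Real.norm_eq_abs, abs_mul]
    exact mul_le_mul (hM s hs t ht') (hzB t ht') (abs_nonneg _)
      (le_trans (abs_nonneg _) (hM s hs t ht'))

lemma Kop_lip
    (hκ₁ : ContDiffOn ℝ 1 (Function.uncurry κ₁) {p : ℝ × ℝ | 0 ≤ p.2 ∧ p.2 ≤ p.1 ∧ p.1 ≤ 1})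
    (hκ₂ : ContDiffOn ℝ 1 (Function.uncurry κ₂) {p : ℝ × ℝ | 0 ≤ p.1 ∧ p.1 ≤ p.2 ∧ p.2 ≤ 1})
    {L : ℝ}
    (hL : ∀ s ∈ Icc (0:ℝ) 1, ∀ s' ∈ Icc (0:ℝ) 1, ∀ t ∈ Icc (0:ℝ) 1,
        |(if t ≤ s then κ₁ s t else κ₂ s t) - (if t ≤ s' then κ₁ s' t else κ₂ s' t)|
          ≤ L * |s - s'|)
    {z : ℝ → ℝ} (hz : AEStronglyMeasurable z (volume.restrict (Ioc (0:ℝ) 1)))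
    {B : ℝ} (hzB : ∀ t ∈ Icc (0:ℝ) 1, |z t| ≤ B)
    {s s' : ℝ} (hs : s ∈ Icc (0:ℝ) 1) (hs' : s' ∈ Icc (0:ℝ) 1) :
    |Kop κ₁ κ₂ z s - Kop κ₁ κ₂ z s'| ≤ L * B * |s - s'| := by
  have hB : 0 ≤ B := le_trans (abs_nonneg _) (hzB 0 ⟨le_refl _, zero_le_one⟩)
  have hi1 := Kop_integrable hκ₁ hκ₂ hz hzB hs
  have hi2 := Kop_integrable hκ₁ hκ₂ hz hzB hs'
  have hsub : Kop κ₁ κ₂ z s - Kop κ₁ κ₂ z s' = ∫ t in (0:ℝ)..1,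
      ((if t ≤ s then κ₁ s t else κ₂ s t) - (if t ≤ s' then κ₁ s' t else κ₂ s' t)) * z t := by
    unfold Kop
    rw [← intervalIntegral.integral_sub hi1 hi2]
    congr 1
    funext t
    ring
  rw [hsub]
  have h := intervalIntegral.norm_integral_le_of_norm_le_const (C := L * |s - s'| * B)
    (a := (0:ℝ)) (b := 1)
    (f := fun t => ((if t ≤ s then κ₁ s t else κ₂ s t) - (if t ≤ s' then κ₁ s' t else κ₂ s' t)) * z t) ?_
  · calc ‖∫ t in (0:ℝ)..1, ((if t ≤ s then κ₁ s t else κ₂ s t) -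
            (if t ≤ s' then κ₁ s' t else κ₂ s' t)) * z t‖
        ≤ L * |s - s'| * B * |1 - 0| := h
      _ = L * B * |s - s'| := by rw [show |(1:ℝ) - 0| = 1 by norm_num]; ring
  · intro t ht
    rw [uIoc_of_le zero_le_one] at ht
    have ht' : t ∈ Icc (0:ℝ) 1 := ⟨ht.1.le, ht.2⟩
    rw [Real.norm_eq_abs, abs_mul]
    exact mul_le_mul (hL s hs s' hs' t ht') (hzB t ht') (abs_nonneg _)
      (le_trans (abs_nonneg _) (hL s hs s' hs' t ht'))
end Sec7

/-- there is a constant `C`, independent of `n`, such that for every `n ≥ 1`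
and every `x ∈ C[0,1]`, `‖K(I − Pₙ)K(I − Pₙ)x‖∞ ≤ C h ‖x‖∞`; i.e. the operator norm of
`K(I − Pₙ)K(I − Pₙ)` on `C[0,1]` is `O(h)`. -/
theorem stmt11 (r : ℕ) (hr : 1 ≤ r) (κ₁ κ₂ : ℝ → ℝ → ℝ)
    -- κ₁, κ₂ are continuously differentiable on Ω₁, Ω₂ respectively
    (hκ₁ : ContDiffOn ℝ 1 (Function.uncurry κ₁) {p : ℝ × ℝ | 0 ≤ p.2 ∧ p.2 ≤ p.1 ∧ p.1 ≤ 1})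
    (hκ₂ : ContDiffOn ℝ 1 (Function.uncurry κ₂) {p : ℝ × ℝ | 0 ≤ p.1 ∧ p.1 ≤ p.2 ∧ p.2 ≤ 1})
    -- they agree on the diagonal
    (hdiag : ∀ s ∈ Icc (0:ℝ) 1, κ₁ s s = κ₂ s s) :
    ∃ C : ℝ, ∀ n : ℕ, 1 ≤ n → ∀ x : ℝ → ℝ, ContinuousOn x (Icc (0:ℝ) 1) →
      supNorm (Kop κ₁ κ₂ (fun s =>
          Kop κ₁ κ₂ (fun t => x t - Pn r n x t) s
            - Pn r n (Kop κ₁ κ₂ (fun t => x t - Pn r n x t)) s))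
        ≤ C * (1 / (n:ℝ)) * supNorm x := by
  obtain ⟨M, L, hM0, hL0, hMb, hLb⟩ := kernel_facts hκ₁ hκ₂ hdiag
  have hΛ0 := Lam_nonneg r
  refine ⟨M * (Lam r * (L * ((1 + Lam r)))), ?_⟩
  intro n hn x hx
  have hn0 : (0:ℝ) < n := by exact_mod_cast hn
  set B₀ := supNorm x with hB₀def
  have hB₀ : 0 ≤ B₀ := supNorm_nonneg hx
  have hxB : ∀ t ∈ Icc (0:ℝ) 1, |x t| ≤ B₀ := fun t ht => le_supNorm hx ht
  set w : ℝ → ℝ := fun t => x t - Pn r n x t with hwdef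
  have hwB : ∀ t ∈ Icc (0:ℝ) 1, |w t| ≤ (1 + Lam r) * B₀ := by
    intro t ht
    calc |x t - Pn r n x t| ≤ |x t| + |Pn r n x t| := abs_sub _ _
      _ ≤ B₀ + Lam r * B₀ := add_le_add (hxB t ht) (Pn_bound hr hn hxB ht)
      _ = (1 + Lam r) * B₀ := by ring
  have hwm : AEStronglyMeasurable w (volume.restrict (Ioc (0:ℝ) 1)) :=
    ((hx.mono Ioc_subset_Icc_self).aestronglyMeasurable measurableSet_Ioc).sub
      ((measurable_Pn r n x).aestronglyMeasurable)
  set Kw : ℝ → ℝ := Kop κ₁ κ₂ w with hKwdef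
  have hB1 : (0:ℝ) ≤ (1 + Lam r) * B₀ := mul_nonneg (by linarith) hB₀
  have hKwB : ∀ s ∈ Icc (0:ℝ) 1, |Kw s| ≤ M * ((1 + Lam r) * B₀) :=
    fun s hs => Kop_bound hMb hB1 hwB hs
  have hL'0 : (0:ℝ) ≤ L * ((1 + Lam r) * B₀) := mul_nonneg hL0 hB1
  have hKwLip : ∀ a ∈ Icc (0:ℝ) 1, ∀ b ∈ Icc (0:ℝ) 1,
      |Kw a - Kw b| ≤ (L * ((1 + Lam r) * B₀)) * |a - b| :=
    fun a ha b hb => Kop_lip hκ₁ hκ₂ hLb hwm hwB ha hb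
  have hKwCont : ContinuousOn Kw (Icc (0:ℝ) 1) := by
    have hlip : LipschitzOnWith (Real.toNNReal (L * ((1 + Lam r) * B₀))) Kw (Icc (0:ℝ) 1) := by
      rw [lipschitzOnWith_iff_dist_le_mul]
      intro a ha b hb
      rw [Real.dist_eq, Real.dist_eq, Real.coe_toNNReal _ hL'0]
      exact hKwLip a ha b hb
    exact hlip.continuousOn
  have hgB : ∀ s ∈ Icc (0:ℝ) 1,
      |Kw s - Pn r n Kw s| ≤ Lam r * (L * ((1 + Lam r) * B₀)) * (1/n) :=
    fun s hs => Pn_err hr hn hL'0 hKwLip hs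
  have hgm : AEStronglyMeasurable (fun s => Kw s - Pn r n Kw s)
      (volume.restrict (Ioc (0:ℝ) 1)) :=
    ((hKwCont.mono Ioc_subset_Icc_self).aestronglyMeasurable measurableSet_Ioc).sub
      ((measurable_Pn r n Kw).aestronglyMeasurable)
  have hgB0 : (0:ℝ) ≤ Lam r * (L * ((1 + Lam r) * B₀)) * (1/n) :=
    mul_nonneg (mul_nonneg hΛ0 hL'0) (by positivity)
  apply supNorm_le
  · have : (0:ℝ) ≤ 1 / (n:ℝ) := by positivity
    have hMΛ : (0:ℝ) ≤ M * (Lam r * (L * (1 + Lam r))) :=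
      mul_nonneg hM0 (mul_nonneg hΛ0 (mul_nonneg hL0 (by linarith)))
    positivity
  · intro s hs
    calc |Kop κ₁ κ₂ (fun s => Kw s - Pn r n Kw s) s|
        ≤ M * (Lam r * (L * ((1 + Lam r) * B₀)) * (1/n)) := Kop_bound hMb hgB0 hgB hs
      _ = M * (Lam r * (L * (1 + Lam r))) * (1 / (n:ℝ)) * B₀ := by ring
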